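/- Let (b, Q, ν) be a Lévy triplet on ℝ^n with characteristic exponent ψ. Let Σ be the positive semidefinite square root of Q with column vectors σ₁, …, σₙ. Let G_ν be the smallest additive subgroup of ℝ^n containing supp ν, let V_ν = {x ∈ closure(G_ν) : t·x ∈ closure(G_ν) for all t ∈ ℝ}, assume ∫_{{y : |y| < 1} \ V_ν} |y| ν(dy) < ∞ and set c_ν = −∫_{{y : |y| < 1} \ V_ν} y ν(dy), and let W = span_ℝ{σ₁, …, σₙ, b + c_ν}. Then the orthogonal subgroup of the zero set of ψ satisfies {x ∈ ℝ^n : e^{i⟨γ, x⟩} = 1 for every γ ∈ ℝ^n with ψ(γ) = 0} = closure(G_ν + W). -/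

import Mathlib

open MeasureTheory Complex
open scoped ENNReal Topology Pointwise

noncomputable section

abbrev En (n : ℕ) : Type := EuclideanSpace ℝ (Fin n)

/-- A Lévy triplet `(b, Q, ν)` on `ℝ^n`. -/
structure LevyTriplet (n : ℕ) where
  b : En n
  Q : Matrix (Fin n) (Fin n) ℝ
  ν : Measure (En n)
  hQsymm : Q.IsSymm
  hQpos : Q.PosSemidef
  hν0 : ν {0} = 0
  hνint : ∫⁻ x, ENNReal.ofReal (min (‖x‖ ^ 2) 1) ∂ν < ⊤

/-- The positive semidefinite square root of a positive semidefinite matrix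
(the definition `Matrix.PosSemidef.sqrt` of the older Mathlib, since removed). -/
def Matrix.PosSemidef.sqrt {m : Type*} [Fintype m] [DecidableEq m] {A : Matrix m m ℝ}
    (hA : A.PosSemidef) : Matrix m m ℝ :=
  (hA.1.eigenvectorUnitary : Matrix m m ℝ) * Matrix.diagonal (fun i => √(hA.1.eigenvalues i))
    * (star hA.1.eigenvectorUnitary : Matrix m m ℝ)

namespace LevyTriplet

variable {n : ℕ}

/-- The characteristic exponent `ψ` of a Lévy triplet. -/
def charExp (T : LevyTriplet n) (ξ : En n) : ℂ :=
  -Complex.I * ((inner ℝ T.b ξ : ℝ) : ℂ)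
    + (1 / 2 : ℂ) * (((∑ i, ∑ j, T.Q i j * ξ i * ξ j : ℝ)) : ℂ)
    + ∫ x, (1 - Complex.exp (Complex.I * ((inner ℝ ξ x : ℝ) : ℂ))
        + Complex.I * ((inner ℝ ξ x : ℝ) : ℂ)
          * ({y : En n | ‖y‖ < 1}.indicator (fun _ => (1 : ℂ)) x)) ∂T.ν

/-- The adjoint Lévy operator `L*` of a Lévy triplet. -/
def adjOp (T : LevyTriplet n) (u : En n → ℝ) (x : En n) : ℝ :=
  -(fderiv ℝ u x T.b)
    + (1 / 2) * ∑ i, ∑ j, T.Q i j *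
        fderiv ℝ (fun z => fderiv ℝ u z (EuclideanSpace.single j 1)) x (EuclideanSpace.single i 1)
    + ∫ y, (u (x - y) - u x
        + fderiv ℝ u x y * ({z : En n | ‖z‖ < 1}.indicator (fun _ => (1 : ℝ)) y)) ∂T.ν

end LevyTriplet

/-- Test functions: smooth and compactly supported. -/
def IsTestFun {n : ℕ} (φ : En n → ℝ) : Prop :=
  ContDiff ℝ (⊤ : ℕ∞) φ ∧ HasCompactSupport φ

/-- `L_ψ f = 0` weakly. -/
def WeakLpsiZero {n : ℕ} (T : LevyTriplet n) (f : En n → ℝ) : Prop :=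
  ∀ φ : En n → ℝ, IsTestFun φ →
    Integrable (fun x => f x * T.adjOp φ x) volume ∧
    ∫ x, f x * T.adjOp φ x = 0

/-- The transition semigroup `(μ_t)` of a Lévy triplet. -/
def IsTransitionSemigroup {n : ℕ} (T : LevyTriplet n) (μ : ℝ → Measure (En n)) : Prop :=
  (∀ t : ℝ, 0 ≤ t → IsProbabilityMeasure (μ t)) ∧
  (∀ t : ℝ, 0 ≤ t → ∀ ξ : En n,
    ∫ x, Complex.exp (Complex.I * ((inner ℝ ξ x : ℝ) : ℂ)) ∂(μ t)
      = Complex.exp (-(t : ℂ) * T.charExp ξ))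

/-- Submultiplicative function: `g(x+y) ≤ c g(x) g(y)`. -/
def Submultiplicative {n : ℕ} (g : En n → ℝ) : Prop :=
  ∃ c : ℝ, 0 < c ∧ ∀ x y : En n, g (x + y) ≤ c * g x * g y

/-- Locally bounded function. -/
def LocallyBdd {n : ℕ} (g : En n → ℝ) : Prop :=
  ∀ K : Set (En n), IsCompact K → ∃ M : ℝ, ∀ x ∈ K, g x ≤ M

/-- Topological support of a measure. -/
def measSupport {n : ℕ} (μ : Measure (En n)) : Set (En n) :=
  {x | ∀ U : Set (En n), IsOpen U → x ∈ U → 0 < μ U}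

/-- The analytically extended exponent `ψ†(η) = ψ(-iη)`. -/
def LevyTriplet.psiDagger {n : ℕ} (T : LevyTriplet n) (η : En n) : ℝ :=
  -(inner ℝ T.b η : ℝ) - (1 / 2) * (∑ i, ∑ j, T.Q i j * η i * η j)
    + ∫ x, (1 - Real.exp (inner ℝ η x : ℝ) + (inner ℝ η x : ℝ)
        * ({z : En n | ‖z‖ < 1}.indicator (fun _ => (1 : ℝ)) x)) ∂T.ν

/-- The (weak) Liouville property for `L_ψ`: every bounded weak solution of
`L_ψ f = 0` is a.e. constant. -/
def LiouvilleProperty {n : ℕ} (T : LevyTriplet n) : Prop :=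
  ∀ f : En n → ℝ, MemLp f ⊤ volume → WeakLpsiZero T f →
    ∃ c : ℝ, f =ᵐ[volume] fun _ => c

/- ===== Auxiliary development ===== -/

section DualityPart

open Submodule

variable {E : Type*} [NormedAddCommGroup E] [InnerProductSpace ℝ E] [FiniteDimensional ℝ E]

/-- The lineality space of an additive subgroup. -/
def linealitySpace (H : AddSubgroup E) : Submodule ℝ E where
  carrier := {x | ∀ t : ℝ, t • x ∈ H}
  add_mem' := fun ha hb t => by rw [smul_add]; exact H.add_mem (ha t) (hb t)
  zero_mem' := fun t => by rw [smul_zero]; exact H.zero_mem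
  smul_mem' := fun c x hx t => by rw [smul_smul]; exact hx (t * c)

omit [FiniteDimensional ℝ E] in
lemma mem_linealitySpace {H : AddSubgroup E} {x : E} :
    x ∈ linealitySpace H ↔ ∀ t : ℝ, t • x ∈ H := Iff.rfl

omit [FiniteDimensional ℝ E] in
lemma linealitySpace_le (H : AddSubgroup E) {x : E} (hx : x ∈ linealitySpace H) : x ∈ H := by
  simpa using (mem_linealitySpace.mp hx) 1

lemma exists_discrete_ball (H : AddSubgroup E) (hH : IsClosed (H : Set E)) :
    ∃ ε : ℝ, 0 < ε ∧ ∀ y ∈ H, y ∈ (linealitySpace H)ᗮ → ‖y‖ < ε → y = 0 := by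
  by_contra hcon
  push_neg at hcon
  have hseq : ∀ k : ℕ, ∃ y : E, y ∈ H ∧ y ∈ (linealitySpace H)ᗮ ∧
      ‖y‖ < 1 / (k + 1) ∧ y ≠ 0 := by
    intro k
    obtain ⟨y, hy1, hy2, hy3, hy4⟩ := hcon (1 / (k + 1)) (by positivity)
    exact ⟨y, hy1, hy2, hy3, hy4⟩
  choose y hyH hyO hynorm hyne using hseq
  set u : ℕ → E := fun k => (‖y k‖)⁻¹ • y k with hu_def
  have hnorm_ne : ∀ k, ‖y k‖ ≠ 0 := fun k => norm_ne_zero_iff.mpr (hyne k)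
  have hu_sphere : ∀ k, u k ∈ Metric.sphere (0 : E) 1 := by
    intro k
    simp [hu_def, norm_smul, inv_mul_cancel₀ (hnorm_ne k)]
  obtain ⟨uoo, huoo_mem, φ, hφ, hφ_tendsto⟩ :=
    (isCompact_sphere (0 : E) 1).tendsto_subseq hu_sphere
  have huoo_norm : ‖uoo‖ = 1 := by simpa using huoo_mem
  have hy_tendsto : Filter.Tendsto (fun k => ‖y (φ k)‖) Filter.atTop (nhds 0) := by
    refine squeeze_zero (fun k => norm_nonneg _) (fun k => ?_)
      tendsto_one_div_add_atTop_nhds_zero_nat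
    have h1 : ‖y (φ k)‖ < 1 / ((φ k : ℝ) + 1) := hynorm (φ k)
    have h2 : (1 : ℝ) / ((φ k : ℝ) + 1) ≤ 1 / ((k : ℝ) + 1) := by
      apply one_div_le_one_div_of_le (by positivity)
      have : k ≤ φ k := hφ.le_apply
      push_cast
      linarith [(Nat.cast_le (α := ℝ)).mpr this]
    linarith
  have huoo_lin : uoo ∈ linealitySpace H := by
    intro t
    set m : ℕ → ℤ := fun k => ⌊t / ‖y (φ k)‖⌋ with hm_def
    set s : ℕ → ℝ := fun k => (m k : ℝ) * ‖y (φ k)‖ with hs_def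
    have hs_tendsto : Filter.Tendsto s Filter.atTop (nhds t) := by
      have hbound : ∀ k, ‖s k - t‖ ≤ ‖y (φ k)‖ := by
        intro k
        have hpos : (0:ℝ) < ‖y (φ k)‖ := lt_of_le_of_ne (norm_nonneg _) (Ne.symm (hnorm_ne _))
        have h1 : (m k : ℝ) ≤ t / ‖y (φ k)‖ := Int.floor_le _
        have h2 : t / ‖y (φ k)‖ - 1 ≤ (m k : ℝ) := le_of_lt (Int.sub_one_lt_floor _)
        have h1' : (m k : ℝ) * ‖y (φ k)‖ ≤ t := by
          rw [← le_div_iff₀ hpos]; exact h1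
        have h2' : t - ‖y (φ k)‖ ≤ (m k : ℝ) * ‖y (φ k)‖ := by
          have := mul_le_mul_of_nonneg_right h2 (le_of_lt hpos)
          calc t - ‖y (φ k)‖ = (t / ‖y (φ k)‖ - 1) * ‖y (φ k)‖ := by
                field_simp
            _ ≤ (m k : ℝ) * ‖y (φ k)‖ := this
        rw [Real.norm_eq_abs, abs_le]
        constructor <;> simp only [hs_def] <;> linarith
      have : Filter.Tendsto (fun k => s k - t) Filter.atTop (nhds 0) :=
        squeeze_zero_norm hbound hy_tendsto
      simpa using this.add (tendsto_const_nhds (x := t))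
    have hmem : ∀ k, s k • u (φ k) ∈ H := by
      intro k
      have : s k • u (φ k) = m k • y (φ k) := by
        rw [hs_def, hu_def]
        simp only [smul_smul]
        rw [mul_assoc, mul_inv_cancel₀ (hnorm_ne _), mul_one, ← Int.cast_smul_eq_zsmul ℝ]
      rw [this]
      exact AddSubgroup.zsmul_mem H (hyH _) _
    have htend : Filter.Tendsto (fun k => s k • u (φ k)) Filter.atTop (nhds (t • uoo)) :=
      hs_tendsto.smul hφ_tendsto
    exact hH.mem_of_tendsto htend (Filter.Eventually.of_forall hmem)
  have huoo_orth : uoo ∈ (linealitySpace H)ᗮ := by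
    have hclosed : IsClosed ((linealitySpace H)ᗮ : Set E) := Submodule.isClosed_orthogonal _
    refine hclosed.mem_of_tendsto hφ_tendsto (Filter.Eventually.of_forall fun k => ?_)
    exact Submodule.smul_mem _ _ (hyO (φ k))
  have : uoo = 0 := by
    have h0 : (inner ℝ uoo uoo : ℝ) = 0 := huoo_orth uoo huoo_lin
    exact inner_self_eq_zero.mp h0
  rw [this] at huoo_norm
  simp at huoo_norm

theorem closed_subgroup_dual_separates (H : AddSubgroup E) (hH : IsClosed (H : Set E))
    {x : E} (hx : x ∉ H) :
    ∃ γ : E, (∀ h ∈ H, ∃ k : ℤ, (inner ℝ γ h : ℝ) = 2 * Real.pi * k) ∧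
      ¬ ∃ k : ℤ, (inner ℝ γ x : ℝ) = 2 * Real.pi * k := by
  classical
  set V := linealitySpace H with hV_def
  set Λ : Submodule ℤ E := AddSubgroup.toIntSubmodule (H ⊓ Vᗮ.toAddSubgroup) with hΛ_def
  have hΛ_mem : ∀ z : E, z ∈ Λ ↔ z ∈ H ∧ z ∈ Vᗮ := fun z => Iff.rfl
  set U : Submodule ℝ E := span ℝ (Λ : Set E) with hU_def
  have hΛU : (Λ : Set E) ⊆ U := subset_span
  have hUV : U ≤ Vᗮ := by
    rw [hU_def, span_le]
    intro z hz
    exact ((hΛ_mem z).mp hz).2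
  have hVU : V ≤ Uᗮ := le_trans (Submodule.le_orthogonal_orthogonal V)
    (Submodule.orthogonal_le hUV)
  have hdecomp : ∀ h ∈ H, h - (orthogonalProjection V h : E) ∈ Λ := by
    intro h hh
    refine (hΛ_mem _).mpr ⟨?_, V.sub_starProjection_mem_orthogonal h⟩
    exact H.sub_mem hh (linealitySpace_le H (orthogonalProjection V h).2)
  set x' := x - (orthogonalProjection V x : E) with hx'_def
  have hx'V : x' ∈ Vᗮ := V.sub_starProjection_mem_orthogonal x
  have hx'Λ : x' ∉ Λ := by
    intro hmem
    apply hx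
    have : x = (orthogonalProjection V x : E) + x' := by rw [hx'_def]; abel
    rw [this]
    exact H.add_mem (linealitySpace_le H (orthogonalProjection V x).2) ((hΛ_mem _).mp hmem).1
  by_cases hxU : x' ∈ U
  · set L₀ : Submodule ℤ U := Λ.comap ((U.subtype).restrictScalars ℤ) with hL₀_def
    have hL₀_mem : ∀ z : U, z ∈ L₀ ↔ (z : E) ∈ Λ := fun z => Iff.rfl
    obtain ⟨ε, hε, hsep⟩ := exists_discrete_ball H hH
    have hdisc : DiscreteTopology L₀ := by
      rw [discreteTopology_iff_isOpen_singleton_zero]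
      have : ({0} : Set L₀) = (fun w : L₀ => ((w : U) : E)) ⁻¹' Metric.ball (0 : E) ε := by
        ext w
        simp only [Set.mem_singleton_iff, Set.mem_preimage, Metric.mem_ball, dist_zero_right]
        constructor
        · intro hw; rw [hw]; simpa using hε
        · intro hw
          have hmem := (hL₀_mem w).mp w.2
          have : (w : E) = 0 :=
            hsep _ ((hΛ_mem _).mp hmem).1 ((hΛ_mem _).mp hmem).2 hw
          ext
          exact this
      rw [this]
      exact IsOpen.preimage (continuous_subtype_val.comp continuous_subtype_val)
        Metric.isOpen_ball
    have h_img : U.subtype '' (L₀ : Set U) = (Λ : Set E) := by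
      ext z
      constructor
      · rintro ⟨w, hw, rfl⟩; exact (hL₀_mem w).mp hw
      · intro hz; exact ⟨⟨z, hΛU hz⟩, (hL₀_mem _).mpr hz, rfl⟩
    have hzl : IsZLattice ℝ L₀ := by
      constructor
      rw [← (Submodule.map_injective_of_injective (injective_subtype U)).eq_iff,
        Submodule.map_span, Submodule.map_top, range_subtype]
      rw [show U.subtype '' (L₀ : Set U) = (Λ : Set E) from h_img]
    have hfin : Module.Finite ℤ L₀ := ZLattice.module_finite ℝ L₀
    have hfree : Module.Free ℤ L₀ := ZLattice.module_free ℝ L₀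
    set b := Module.Free.chooseBasis ℤ L₀ with hb_def
    set B := b.ofZLatticeBasis ℝ L₀ with hB_def
    set xu : U := ⟨x', hxU⟩ with hxu_def
    have hxu_not : xu ∉ span ℤ (Set.range B) := by
      rw [b.ofZLatticeBasis_span ℝ]
      intro hmem
      exact hx'Λ ((hL₀_mem xu).mp hmem)
    have : ¬ ∀ i, B.repr xu i ∈ Set.range (algebraMap ℤ ℝ) := by
      intro hall
      exact hxu_not ((B.mem_span_iff_repr_mem ℤ xu).mpr hall)
    push_neg at this
    obtain ⟨j, hj⟩ := this
    set f : E →ₗ[ℝ] ℝ := (B.coord j).comp ((orthogonalProjection U).toLinearMap) with hf_def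
    set γ := (InnerProductSpace.toDual ℝ E).symm
      ((2 * Real.pi) • (LinearMap.toContinuousLinearMap f)) with hγ_def
    have hγ_apply : ∀ z : E, (inner ℝ γ z : ℝ) = 2 * Real.pi * f z := by
      intro z
      rw [hγ_def, InnerProductSpace.toDual_symm_apply]
      simp
    have hf_lattice : ∀ z : E, z ∈ Λ → ∃ k : ℤ, f z = k := by
      intro z hz
      have hzU : z ∈ U := hΛU hz
      have hproj : (orthogonalProjection U z : U) = ⟨z, hzU⟩ := by
        ext
        simp [U.starProjection_eq_self_iff.mpr hzU]
      have hzL₀ : (⟨z, hzU⟩ : U) ∈ L₀ := (hL₀_mem _).mpr hz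
      have hzspan : (⟨z, hzU⟩ : U) ∈ span ℤ (Set.range B) := by
        rw [b.ofZLatticeBasis_span ℝ]; exact hzL₀
      obtain ⟨k, hk⟩ := (B.mem_span_iff_repr_mem ℤ _).mp hzspan j
      refine ⟨k, ?_⟩
      rw [hf_def]
      simp only [LinearMap.comp_apply, ContinuousLinearMap.coe_coe]
      rw [hproj]
      rw [Module.Basis.coord_apply, ← hk]
      rfl
    refine ⟨γ, ?_, ?_⟩
    · intro h hh
      obtain ⟨k, hk⟩ := hf_lattice _ (hdecomp h hh)
      have hPV : f ((orthogonalProjection V h : E)) = 0 := by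
        rw [hf_def]
        simp only [LinearMap.comp_apply, ContinuousLinearMap.coe_coe]
        rw [orthogonalProjection_mem_subspace_orthogonalComplement_eq_zero
          (hVU (orthogonalProjection V h).2)]
        simp
      refine ⟨k, ?_⟩
      rw [hγ_apply]
      have : f h = f ((orthogonalProjection V h : E)) + f (h - (orthogonalProjection V h : E)) := by
        rw [← map_add]; congr 1; abel
      rw [this, hPV, hk]
      ring
    · rintro ⟨k, hk⟩
      rw [hγ_apply] at hk
      have hfx : f x = B.repr xu j := by
        rw [hf_def]
        simp only [LinearMap.comp_apply, ContinuousLinearMap.coe_coe]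
        have : x = (orthogonalProjection V x : E) + x' := by rw [hx'_def]; abel
        rw [this, map_add]
        rw [orthogonalProjection_mem_subspace_orthogonalComplement_eq_zero
          (hVU (orthogonalProjection V x).2)]
        have hproj : (orthogonalProjection U x' : U) = xu := by
          ext; simp [U.starProjection_eq_self_iff.mpr hxU, hxu_def]
        rw [zero_add, hproj, Module.Basis.coord_apply]
      apply hj
      refine ⟨k, ?_⟩
      have h2π : (2 * Real.pi) ≠ 0 := by positivity
      have : (k : ℝ) = f x := by
        have := mul_left_cancel₀ h2π hk
        linarith
      simpa [hfx] using this
  · set w := x' - (orthogonalProjection U x' : E) with hw_def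
    have hwU : w ∈ Uᗮ := U.sub_starProjection_mem_orthogonal x'
    have hwV : w ∈ Vᗮ := Vᗮ.sub_mem hx'V (hUV (orthogonalProjection U x').2)
    have hw_ne : w ≠ 0 := by
      intro h0
      apply hxU
      have h0' : x' - (orthogonalProjection U x' : E) = 0 := by rw [← hw_def]; exact h0
      have heq := sub_eq_zero.mp h0'
      rw [heq]; exact (orthogonalProjection U x').2
    set γ := (Real.pi / ‖w‖ ^ 2) • w with hγ_def
    have hinner_w_x : (inner ℝ w x : ℝ) = ‖w‖ ^ 2 := by
      have hx_eq : x = (orthogonalProjection V x : E) + (orthogonalProjection U x' : E) + w := by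
        rw [hw_def, hx'_def]; abel
      rw [hx_eq, inner_add_right, inner_add_right]
      have h1 : (inner ℝ w ((orthogonalProjection V x : E)) : ℝ) = 0 := by
        rw [real_inner_comm]
        exact hwV _ (orthogonalProjection V x).2
      have h2 : (inner ℝ w ((orthogonalProjection U x' : E)) : ℝ) = 0 := by
        rw [real_inner_comm]
        exact hwU _ (orthogonalProjection U x').2
      rw [h1, h2, real_inner_self_eq_norm_sq]
      ring
    refine ⟨γ, ?_, ?_⟩
    · intro h hh
      refine ⟨0, ?_⟩
      have hlam := hdecomp h hh
      have hh_eq : h = (orthogonalProjection V h : E) + (h - (orthogonalProjection V h : E)) := by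
        abel
      rw [hγ_def, inner_smul_left, hh_eq, inner_add_right]
      have h1 : (inner ℝ w ((orthogonalProjection V h : E)) : ℝ) = 0 := by
        rw [real_inner_comm]
        exact hwV _ (orthogonalProjection V h).2
      have h2 : (inner ℝ w (h - (orthogonalProjection V h : E)) : ℝ) = 0 := by
        rw [real_inner_comm]
        exact hwU _ (hΛU hlam)
      rw [h1, h2]
      simp
    · rintro ⟨k, hk⟩
      rw [hγ_def, inner_smul_left, hinner_w_x] at hk
      simp only [starRingEnd_apply, star_trivial] at hk
      have hw_norm : ‖w‖ ^ 2 ≠ 0 := pow_ne_zero _ (norm_ne_zero_iff.mpr hw_ne)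
      rw [div_mul_cancel₀ _ hw_norm] at hk
      have h1 : Real.pi * 1 = Real.pi * (2 * k) := by linear_combination hk
      have h2 : (1 : ℝ) = 2 * k := mul_left_cancel₀ Real.pi_ne_zero h1
      have : (2 * k : ℤ) = 1 := by exact_mod_cast h2.symm
      omega

end DualityPart

section AnalyticPart

open MeasureTheory Matrix

variable {n : ℕ}

lemma expI_eq_one_iff (θ : ℝ) :
    Complex.exp (Complex.I * (θ : ℂ)) = 1 ↔ ∃ k : ℤ, θ = 2 * Real.pi * k := by
  rw [Complex.exp_eq_one_iff]
  constructor
  · rintro ⟨k, hk⟩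
    refine ⟨k, ?_⟩
    have h2 : Complex.I * (θ : ℂ) = Complex.I * ((k : ℂ) * (2 * Real.pi)) := by
      rw [hk]; ring
    have h3 := mul_left_cancel₀ Complex.I_ne_zero h2
    have h4 : θ = (k : ℝ) * (2 * Real.pi) := by exact_mod_cast h3
    linarith
  · rintro ⟨k, rfl⟩
    refine ⟨k, ?_⟩
    push_cast
    ring

lemma theta_zero_of_forall (θ : ℝ)
    (h : ∀ t : ℝ, Complex.exp (Complex.I * ((t * θ : ℝ) : ℂ)) = 1) : θ = 0 := by
  by_contra hθ
  have h1 := h (Real.pi / θ)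
  rw [div_mul_cancel₀ _ hθ] at h1
  rw [mul_comm, Complex.exp_mul_I] at h1
  rw [← Complex.ofReal_cos, ← Complex.ofReal_sin] at h1
  rw [Real.cos_pi, Real.sin_pi] at h1
  simp only [Complex.ofReal_neg, Complex.ofReal_one, Complex.ofReal_zero, zero_mul, add_zero]
    at h1
  norm_num at h1

/-- Complement of the support is null. -/
lemma measSupport_compl_null (ν : Measure (En n)) : ν (measSupport ν)ᶜ = 0 := by
  set S : Set (Set (En n)) := {U | IsOpen U ∧ ν U = 0} with hS_def
  have hcover : (measSupport ν)ᶜ ⊆ ⋃₀ S := by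
    intro x hx
    simp only [measSupport, Set.mem_compl_iff, Set.mem_setOf_eq, not_forall] at hx
    obtain ⟨U, hUopen, hxU, hU⟩ := hx
    exact ⟨U, ⟨hUopen, le_zero_iff.mp (not_lt.mp hU)⟩, hxU⟩
  obtain ⟨T', hT'count, hT'S, hT'eq⟩ :=
    TopologicalSpace.isOpen_sUnion_countable S (fun U hU => hU.1)
  have hnull : ν (⋃₀ T') = 0 := by
    rw [measure_sUnion_null_iff hT'count]
    intro s hs
    exact (hT'S hs).2
  refine measure_mono_null ?_ hnull
  rw [hT'eq]
  exact hcover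

lemma eq_zero_on_measSupport {ν : Measure (En n)} {g : En n → ℝ} (hg : Continuous g)
    (h : g =ᵐ[ν] 0) {x : En n} (hx : x ∈ measSupport ν) : g x = 0 := by
  by_contra hgx
  have hopen : IsOpen {y : En n | g y ≠ 0} := isOpen_compl_singleton.preimage hg
  have hpos : 0 < ν {y | g y ≠ 0} := hx _ hopen hgx
  have hnull : ν {y | g y ≠ 0} = 0 := by
    have := MeasureTheory.ae_iff.mp h
    simpa using this
  rw [hnull] at hpos
  exact lt_irrefl _ hpos

lemma ae_zero_of_zero_on_measSupport {ν : Measure (En n)} {g : En n → ℝ}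
    (h : ∀ x ∈ measSupport ν, g x = 0) : g =ᵐ[ν] 0 := by
  rw [Filter.EventuallyEq, MeasureTheory.ae_iff]
  refine measure_mono_null (fun x hx => ?_) (measSupport_compl_null ν)
  intro hmem
  exact hx (h x hmem)

lemma Matrix.PosSemidef.sqrt_isHermitian' {m : Type*} [Fintype m] [DecidableEq m]
    {A : Matrix m m ℝ} (hA : A.PosSemidef) : hA.sqrt.IsHermitian := by
  unfold Matrix.PosSemidef.sqrt Matrix.IsHermitian
  simp [Matrix.conjTranspose_mul, Matrix.diagonal_conjTranspose, Matrix.mul_assoc,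
    Matrix.star_eq_conjTranspose]

lemma Matrix.PosSemidef.sqrt_mul_self {m : Type*} [Fintype m] [DecidableEq m]
    {A : Matrix m m ℝ} (hA : A.PosSemidef) : hA.sqrt * hA.sqrt = A := by
  have hU : (star hA.1.eigenvectorUnitary : Matrix m m ℝ) * (hA.1.eigenvectorUnitary : Matrix m m ℝ)
      = 1 := Unitary.coe_star_mul_self _
  have hD : Matrix.diagonal (fun i => √(hA.1.eigenvalues i))
      * Matrix.diagonal (fun i => √(hA.1.eigenvalues i))
      = Matrix.diagonal (RCLike.ofReal ∘ hA.1.eigenvalues) := by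
    rw [Matrix.diagonal_mul_diagonal]
    congr 1
    funext i
    simp [Real.mul_self_sqrt (hA.eigenvalues_nonneg i)]
  unfold Matrix.PosSemidef.sqrt
  conv_rhs => rw [hA.1.spectral_theorem, Unitary.conjStarAlgAut_apply]
  rw [← hD]
  simp only [Matrix.mul_assoc]
  rw [← Matrix.mul_assoc (star _ : Matrix m m ℝ) (hA.1.eigenvectorUnitary : Matrix m m ℝ), hU,
    Matrix.one_mul]

namespace LevyTriplet

/-- The quadratic form of the triplet. -/
def qform (T : LevyTriplet n) (γ : En n) : ℝ := ∑ i, ∑ j, T.Q i j * γ i * γ j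

lemma qform_eq_dot (T : LevyTriplet n) (γ : En n) :
    T.qform γ = dotProduct (fun i => γ i) (T.Q *ᵥ fun i => γ i) := by
  unfold qform
  simp only [dotProduct, Matrix.mulVec, Finset.mul_sum]
  exact Finset.sum_congr rfl fun i _ => Finset.sum_congr rfl fun j _ => by ring

lemma sqrt_symm_entries (T : LevyTriplet n) (i j : Fin n) :
    T.hQpos.sqrt i j = T.hQpos.sqrt j i := by
  have hH : T.hQpos.sqrt.IsHermitian := T.hQpos.sqrt_isHermitian'
  have := hH.apply i j
  simpa using this.symm

lemma sqrt_transpose (T : LevyTriplet n) : (T.hQpos.sqrt)ᵀ = T.hQpos.sqrt := by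
  ext i j
  simp [Matrix.transpose_apply, T.sqrt_symm_entries i j]

lemma qform_eq_sum_sq (T : LevyTriplet n) (γ : En n) :
    T.qform γ = ∑ k, ((T.hQpos.sqrt *ᵥ fun i => γ i) k) ^ 2 := by
  rw [qform_eq_dot]
  conv_lhs => rw [← T.hQpos.sqrt_mul_self]
  rw [← Matrix.mulVec_mulVec, dotProduct_mulVec]
  rw [show Matrix.vecMul (fun i => γ i) T.hQpos.sqrt = T.hQpos.sqrt *ᵥ (fun i => γ i) by
    conv_lhs => rw [← T.sqrt_transpose]
    exact Matrix.vecMul_transpose _ _]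
  simp only [dotProduct, sq]

lemma qform_nonneg (T : LevyTriplet n) (γ : En n) : 0 ≤ T.qform γ := by
  rw [qform_eq_sum_sq]
  exact Finset.sum_nonneg fun k _ => sq_nonneg _

lemma qform_eq_zero_iff (T : LevyTriplet n) (γ : En n) :
    T.qform γ = 0 ↔ ∀ k, (T.hQpos.sqrt *ᵥ fun i => γ i) k = 0 := by
  rw [qform_eq_sum_sq]
  constructor
  · intro h k
    have := (Finset.sum_eq_zero_iff_of_nonneg (fun i _ => sq_nonneg _)).mp h k (Finset.mem_univ _)
    exact pow_eq_zero_iff (by norm_num) |>.mp this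
  · intro h
    apply Finset.sum_eq_zero
    intro k _
    rw [h k]
    ring

lemma inner_col (T : LevyTriplet n) (γ : En n) (i : Fin n) :
    (inner ℝ ((EuclideanSpace.equiv (Fin n) ℝ).symm (fun j => T.hQpos.sqrt j i)) γ : ℝ)
      = (T.hQpos.sqrt *ᵥ fun j => γ j) i := by
  simp only [PiLp.inner_apply, RCLike.inner_apply, conj_trivial, Matrix.mulVec, dotProduct]
  refine Finset.sum_congr rfl fun j _ => ?_
  rw [T.sqrt_symm_entries i j]
  exact mul_comm _ _

end LevyTriplet

/-- Real part of the Lévy integrand. -/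
def fRe (γ : En n) (x : En n) : ℝ := 1 - Real.cos (inner ℝ γ x : ℝ)

/-- Imaginary part of the Lévy integrand. -/
def fIm (γ : En n) (x : En n) : ℝ := -Real.sin (inner ℝ γ x : ℝ)
    + (inner ℝ γ x : ℝ) * ({y : En n | ‖y‖ < 1}.indicator (fun _ => (1 : ℝ)) x)

/-- The Lévy integrand. -/
def Fc (γ : En n) (x : En n) : ℂ := 1 - Complex.exp (Complex.I * ((inner ℝ γ x : ℝ) : ℂ))
    + Complex.I * ((inner ℝ γ x : ℝ) : ℂ) * ({y : En n | ‖y‖ < 1}.indicator (fun _ => (1 : ℂ)) x)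

lemma ballSet_open : IsOpen {y : En n | ‖y‖ < 1} := isOpen_lt continuous_norm continuous_const

lemma inner_continuous (γ : En n) : Continuous fun x : En n => (inner ℝ γ x : ℝ) :=
  continuous_const.inner continuous_id

lemma Fc_eq (γ x : En n) : Fc γ x = (fRe γ x : ℂ) + (fIm γ x : ℂ) * Complex.I := by
  unfold Fc fRe fIm
  by_cases hx : x ∈ {y : En n | ‖y‖ < 1}
  · rw [Set.indicator_of_mem hx, Set.indicator_of_mem hx]
    rw [mul_comm Complex.I ((inner ℝ γ x : ℝ) : ℂ), Complex.exp_mul_I,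
      ← Complex.ofReal_cos, ← Complex.ofReal_sin]
    push_cast
    ring
  · rw [Set.indicator_of_notMem hx, Set.indicator_of_notMem hx]
    rw [mul_comm Complex.I ((inner ℝ γ x : ℝ) : ℂ), Complex.exp_mul_I,
      ← Complex.ofReal_cos, ← Complex.ofReal_sin]
    push_cast
    ring

lemma fRe_eq_re (γ x : En n) : fRe γ x = (Fc γ x).re := by
  rw [Fc_eq]; simp

lemma fIm_eq_im (γ x : En n) : fIm γ x = (Fc γ x).im := by
  rw [Fc_eq]; simp

lemma fRe_nonneg (γ x : En n) : 0 ≤ fRe γ x :=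
  sub_nonneg.mpr (Real.cos_le_one _)

lemma Fc_aesm (γ : En n) (ν : MeasureTheory.Measure (En n)) :
    AEStronglyMeasurable (Fc γ) ν := by
  apply StronglyMeasurable.aestronglyMeasurable
  apply StronglyMeasurable.add
  · apply Continuous.stronglyMeasurable
    exact continuous_const.sub (Complex.continuous_exp.comp
      (continuous_const.mul (Complex.continuous_ofReal.comp (inner_continuous γ))))
  · apply StronglyMeasurable.mul
    · apply Continuous.stronglyMeasurable
      exact continuous_const.mul (Complex.continuous_ofReal.comp (inner_continuous γ))
    · exact stronglyMeasurable_const.indicator ballSet_open.measurableSet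

lemma Fc_bound (γ x : En n) :
    ‖Fc γ x‖ ≤ (2 + 3 * (1 + ‖γ‖) ^ 2) * min (‖x‖ ^ 2) 1 := by
  set θ := (inner ℝ γ x : ℝ) with hθ_def
  have hθle : |θ| ≤ ‖γ‖ * ‖x‖ := abs_real_inner_le_norm γ x
  have hγ0 : (0:ℝ) ≤ ‖γ‖ := norm_nonneg _
  have hx0 : (0:ℝ) ≤ ‖x‖ := norm_nonneg _
  by_cases hx : x ∈ {y : En n | ‖y‖ < 1}
  · have hxlt : ‖x‖ < 1 := hx
    have hmin : min (‖x‖ ^ 2) 1 = ‖x‖ ^ 2 := min_eq_left (by nlinarith)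
    rw [hmin]
    have hFc : Fc γ x = -(Complex.exp (Complex.I * (θ : ℂ)) - 1 - Complex.I * (θ : ℂ)) := by
      unfold Fc
      rw [Set.indicator_of_mem hx]
      ring
    rw [hFc, norm_neg]
    have habs : ‖Complex.I * (θ : ℂ)‖ = |θ| := by
      simp
    by_cases hθ1 : |θ| ≤ 1
    · have hb := Complex.norm_exp_sub_one_sub_id_le (x := Complex.I * (θ : ℂ))
        (by rw [habs]; exact hθ1)
      rw [habs] at hb
      have h1 : ‖Complex.exp (Complex.I * (θ:ℂ)) - 1 - Complex.I * (θ:ℂ)‖ ≤ |θ| ^ 2 := hb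
      have h2 : |θ| ^ 2 ≤ (‖γ‖ * ‖x‖) ^ 2 := by nlinarith [abs_nonneg θ]
      nlinarith [sq_nonneg (‖x‖), sq_nonneg (1 + ‖γ‖), sq_nonneg ‖γ‖]
    · push_neg at hθ1
      have h1 : ‖Complex.exp (Complex.I * (θ:ℂ)) - 1 - Complex.I * (θ:ℂ)‖
          ≤ ‖Complex.exp (Complex.I * (θ:ℂ)) - 1‖ + ‖Complex.I * (θ:ℂ)‖ :=
        norm_sub_le _ _
      have h2 : ‖Complex.exp (Complex.I * (θ:ℂ)) - 1‖
          ≤ ‖Complex.exp (Complex.I * (θ:ℂ))‖ + ‖(1:ℂ)‖ := norm_sub_le _ _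
      have h3 : ‖Complex.exp (Complex.I * (θ:ℂ))‖ = 1 := by
        rw [mul_comm]
        exact Complex.norm_exp_ofReal_mul_I θ
      have h4 : ‖Complex.I * (θ:ℂ)‖ = |θ| := habs
      have h5 : |θ| ≤ ‖γ‖ * ‖x‖ := hθle
      have h6 : (‖γ‖ * ‖x‖)^2 ≤ (1+‖γ‖)^2 * ‖x‖^2 := by nlinarith
      have h7 : |θ|^2 ≥ |θ| := by nlinarith [abs_nonneg θ]
      have h8 : |θ|^2 ≤ (‖γ‖*‖x‖)^2 := by nlinarith [abs_nonneg θ]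
      have h9 : ‖(1:ℂ)‖ = 1 := by norm_num
      nlinarith [sq_nonneg ‖x‖, abs_nonneg θ]
  · have hxge : (1:ℝ) ≤ ‖x‖ := not_lt.mp hx
    have hmin : min (‖x‖ ^ 2) 1 = 1 := min_eq_right (by nlinarith)
    rw [hmin, mul_one]
    have hFc : Fc γ x = 1 - Complex.exp (Complex.I * (θ : ℂ)) := by
      unfold Fc
      rw [Set.indicator_of_notMem hx]
      ring
    rw [hFc]
    have h2 : ‖(1:ℂ) - Complex.exp (Complex.I * (θ:ℂ))‖
        ≤ ‖(1:ℂ)‖ + ‖Complex.exp (Complex.I * (θ:ℂ))‖ := norm_sub_le _ _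
    have h3 : ‖Complex.exp (Complex.I * (θ:ℂ))‖ = 1 := by
      rw [mul_comm]
      exact Complex.norm_exp_ofReal_mul_I θ
    have h9 : ‖(1:ℂ)‖ = 1 := by norm_num
    nlinarith [sq_nonneg (1 + ‖γ‖)]

namespace LevyTriplet

lemma min_integrable (T : LevyTriplet n) :
    Integrable (fun x : En n => min (‖x‖ ^ 2) 1) T.ν := by
  constructor
  · exact (Continuous.aestronglyMeasurable ((continuous_norm.pow 2).min continuous_const))
  · rw [MeasureTheory.hasFiniteIntegral_iff_ofReal (Filter.Eventually.of_forall fun x =>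
      le_min (by positivity) zero_le_one)]
    exact T.hνint

lemma Fc_integrable (T : LevyTriplet n) (γ : En n) : Integrable (Fc γ) T.ν := by
  refine Integrable.mono' ((T.min_integrable).const_mul (2 + 3 * (1 + ‖γ‖) ^ 2))
    (Fc_aesm γ T.ν) (Filter.Eventually.of_forall fun x => ?_)
  exact Fc_bound γ x

lemma fRe_integrable (T : LevyTriplet n) (γ : En n) : Integrable (fRe γ) T.ν := by
  have h := (T.Fc_integrable γ).re
  refine h.congr (Filter.Eventually.of_forall fun x => ?_)
  rw [fRe_eq_re]
  simp

lemma fIm_integrable (T : LevyTriplet n) (γ : En n) : Integrable (fIm γ) T.ν := by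
  have h := (T.Fc_integrable γ).im
  refine h.congr (Filter.Eventually.of_forall fun x => ?_)
  rw [fIm_eq_im]
  simp

lemma charExp_decomp (T : LevyTriplet n) (γ : En n) :
    T.charExp γ = (((1/2) * T.qform γ + ∫ x, fRe γ x ∂T.ν : ℝ) : ℂ)
      + (((-(inner ℝ T.b γ : ℝ) + ∫ x, fIm γ x ∂T.ν : ℝ)) : ℂ) * Complex.I := by
  have hI : (∫ x, Fc γ x ∂T.ν)
      = ((∫ x, fRe γ x ∂T.ν : ℝ) : ℂ) + ((∫ x, fIm γ x ∂T.ν : ℝ) : ℂ) * Complex.I := by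
    rw [← integral_re_add_im (T.Fc_integrable γ)]
    simp only [RCLike.re_to_complex, RCLike.im_to_complex, RCLike.I_to_complex]
    congr 1
    · congr 1
      exact integral_congr_ae (Filter.Eventually.of_forall fun x => (fRe_eq_re γ x).symm)
    · congr 2
      exact integral_congr_ae (Filter.Eventually.of_forall fun x => (fIm_eq_im γ x).symm)
  have hintegrand : (∫ x, (1 - Complex.exp (Complex.I * ((inner ℝ γ x : ℝ) : ℂ))
        + Complex.I * ((inner ℝ γ x : ℝ) : ℂ)
          * ({y : En n | ‖y‖ < 1}.indicator (fun _ => (1 : ℂ)) x)) ∂T.ν)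
      = ∫ x, Fc γ x ∂T.ν := rfl
  rw [charExp, hintegrand, hI]
  rw [show (∑ i, ∑ j, T.Q i j * γ i * γ j : ℝ) = T.qform γ from rfl]
  push_cast
  ring

lemma charExp_zero_iff (T : LevyTriplet n) (γ : En n) :
    T.charExp γ = 0 ↔
      ((1/2) * T.qform γ + ∫ x, fRe γ x ∂T.ν = 0
        ∧ -(inner ℝ T.b γ : ℝ) + ∫ x, fIm γ x ∂T.ν = 0) := by
  rw [T.charExp_decomp γ, Complex.ext_iff]
  simp [Complex.add_re, Complex.add_im]

end LevyTriplet

lemma fIm_integral (T : LevyTriplet n) (γ : En n) (Vν : Set (En n)) (hVclosed : IsClosed Vν)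
    (hint : IntegrableOn (fun y : En n => y) ({y : En n | ‖y‖ < 1} \ Vν) T.ν)
    (hsin : (fun x => Real.sin (inner ℝ γ x : ℝ)) =ᵐ[T.ν] 0)
    (hVz : ∀ z ∈ Vν, (inner ℝ γ z : ℝ) = 0) :
    ∫ x, fIm γ x ∂T.ν
      = (inner ℝ γ (∫ y in {y : En n | ‖y‖ < 1} \ Vν, y ∂T.ν) : ℝ) := by
  have hmeas : MeasurableSet ({y : En n | ‖y‖ < 1} \ Vν) :=
    (ballSet_open.measurableSet).diff hVclosed.measurableSet
  have hcongr : fIm γ =ᵐ[T.ν]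
      ({y : En n | ‖y‖ < 1} \ Vν).indicator (fun x => (inner ℝ γ x : ℝ)) := by
    filter_upwards [hsin] with x hx
    have hx0 : Real.sin (inner ℝ γ x : ℝ) = 0 := hx
    unfold fIm
    by_cases hxB : x ∈ {y : En n | ‖y‖ < 1}
    · by_cases hxV : x ∈ Vν
      · rw [Set.indicator_of_mem hxB,
          Set.indicator_of_notMem (show x ∉ {y : En n | ‖y‖ < 1} \ Vν from fun h => h.2 hxV),
          hVz x hxV]
        simp
      · rw [Set.indicator_of_mem hxB,
          Set.indicator_of_mem (show x ∈ {y : En n | ‖y‖ < 1} \ Vν from ⟨hxB, hxV⟩), hx0]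
        ring
    · rw [Set.indicator_of_notMem hxB,
        Set.indicator_of_notMem (show x ∉ {y : En n | ‖y‖ < 1} \ Vν from fun h => hxB h.1),
        hx0]
      ring
  rw [MeasureTheory.integral_congr_ae hcongr, MeasureTheory.integral_indicator hmeas]
  have h := ContinuousLinearMap.integral_comp_comm (innerSL ℝ γ) hint
  simpa using h

end AnalyticPart

section KeyPart

open MeasureTheory Matrix

variable {n : ℕ}

/-- The kernel of the character `z ↦ e^{i⟨γ,z⟩}`. -/
def charKernel (γ : En n) : AddSubgroup (En n) where
  carrier := {z | Complex.exp (Complex.I * ((inner ℝ γ z : ℝ) : ℂ)) = 1}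
  zero_mem' := by simp
  add_mem' := by
    intro a b ha hb
    simp only [Set.mem_setOf_eq] at *
    rw [inner_add_right]
    push_cast
    rw [mul_add, Complex.exp_add, ha, hb, one_mul]
  neg_mem' := by
    intro a ha
    simp only [Set.mem_setOf_eq] at *
    rw [inner_neg_right]
    push_cast
    rw [mul_neg, Complex.exp_neg, ha]
    norm_num

lemma mem_charKernel_iff (γ z : En n) :
    z ∈ charKernel γ ↔ Complex.exp (Complex.I * ((inner ℝ γ z : ℝ) : ℂ)) = 1 := Iff.rfl

lemma charKernel_closed (γ : En n) : IsClosed ((charKernel γ : AddSubgroup (En n)) : Set (En n)) := by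
  have hcont : Continuous fun z : En n => Complex.exp (Complex.I * ((inner ℝ γ z : ℝ) : ℂ)) :=
    Complex.continuous_exp.comp
      (continuous_const.mul (Complex.continuous_ofReal.comp (inner_continuous γ)))
  exact isClosed_eq hcont continuous_const

lemma key (T : LevyTriplet n)
    (Gν : AddSubgroup (En n)) (hG : Gν = AddSubgroup.closure (measSupport T.ν))
    (Vν : Set (En n))
    (hV : Vν = {x ∈ closure (Gν : Set (En n)) | ∀ t : ℝ, t • x ∈ closure (Gν : Set (En n))})
    (hint : IntegrableOn (fun y : En n => y) ({y : En n | ‖y‖ < 1} \ Vν) T.ν)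
    (cν : En n) (hc : cν = -∫ y in {y : En n | ‖y‖ < 1} \ Vν, y ∂T.ν)
    (W : Submodule ℝ (En n))
    (hW : W = Submodule.span ℝ
      (Set.range (fun i : Fin n =>
        (EuclideanSpace.equiv (Fin n) ℝ).symm (fun j => T.hQpos.sqrt j i)) ∪ {T.b + cν}))
    (γ : En n) :
    T.charExp γ = 0 ↔ ∀ z ∈ (Gν : Set (En n)) + (W : Set (En n)),
      Complex.exp (Complex.I * ((inner ℝ γ z : ℝ) : ℂ)) = 1 := by
  have hVclosed : IsClosed Vν := by
    have hset : {x ∈ closure (Gν : Set (En n)) | ∀ t : ℝ, t • x ∈ closure (Gν : Set (En n))}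
        = closure (Gν : Set (En n))
          ∩ ⋂ t : ℝ, (fun x : En n => t • x) ⁻¹' closure (Gν : Set (En n)) := by
      ext z
      simp [Set.mem_iInter]
    rw [hV, hset]
    exact isClosed_closure.inter (isClosed_iInter fun t =>
      isClosed_closure.preimage (continuous_const_smul t))
  have hsupp_sub : (measSupport T.ν : Set (En n)) ⊆ (Gν : Set (En n)) := by
    rw [hG]; exact AddSubgroup.subset_closure
  have hbcW : T.b + cν ∈ W := by
    rw [hW]; exact Submodule.subset_span (Or.inr rfl)
  have hσW : ∀ i : Fin n,
      (EuclideanSpace.equiv (Fin n) ℝ).symm (fun j => T.hQpos.sqrt j i) ∈ W := by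
    intro i
    rw [hW]; exact Submodule.subset_span (Or.inl ⟨i, rfl⟩)
  -- shared computation under the assumption that the character is 1 on `closure Gν`
  have hmain : closure (Gν : Set (En n)) ⊆ ((charKernel γ : AddSubgroup (En n)) : Set (En n)) →
      ((∫ x, fRe γ x ∂T.ν = 0) ∧ (∫ x, fIm γ x ∂T.ν = -(inner ℝ γ cν : ℝ))) := by
    intro hGsub
    have hsupp : ∀ x ∈ measSupport T.ν,
        Real.cos (inner ℝ γ x : ℝ) = 1 ∧ Real.sin (inner ℝ γ x : ℝ) = 0 := by
      intro x hxm
      have hxS : Complex.exp (Complex.I * ((inner ℝ γ x : ℝ) : ℂ)) = 1 :=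
        hGsub (subset_closure (hsupp_sub hxm))
      rw [mul_comm, Complex.exp_mul_I, ← Complex.ofReal_cos, ← Complex.ofReal_sin] at hxS
      rw [Complex.ext_iff] at hxS
      obtain ⟨h1, h2⟩ := hxS
      simp only [Complex.add_re, Complex.ofReal_re, Complex.mul_re, Complex.I_re, Complex.I_im,
        Complex.ofReal_im, Complex.add_im, Complex.mul_im, Complex.one_re, Complex.one_im,
        mul_zero, zero_mul, mul_one, sub_zero, add_zero, zero_add] at h1 h2
      exact ⟨h1, h2⟩
    have hcos_ae : fRe γ =ᵐ[T.ν] 0 :=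
      ae_zero_of_zero_on_measSupport (fun x hx => by
        unfold fRe; rw [(hsupp x hx).1]; ring)
    have hsin_ae : (fun x => Real.sin (inner ℝ γ x : ℝ)) =ᵐ[T.ν] 0 :=
      ae_zero_of_zero_on_measSupport (fun x hx => (hsupp x hx).2)
    have hVzero : ∀ z ∈ Vν, (inner ℝ γ z : ℝ) = 0 := by
      intro z hz
      rw [hV] at hz
      apply theta_zero_of_forall
      intro t
      have hmem := hGsub (hz.2 t)
      have : Complex.exp (Complex.I * ((inner ℝ γ (t • z) : ℝ) : ℂ)) = 1 := hmem
      rwa [real_inner_smul_right] at this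
    refine ⟨?_, ?_⟩
    · rw [MeasureTheory.integral_congr_ae hcos_ae]
      simp
    · rw [fIm_integral T γ Vν hVclosed hint hsin_ae hVzero, hc, inner_neg_right, neg_neg]
  constructor
  · -- forward direction
    intro hψ
    obtain ⟨hre, him⟩ := (T.charExp_zero_iff γ).mp hψ
    have hfretotal : 0 ≤ ∫ x, fRe γ x ∂T.ν :=
      integral_nonneg (fun x => fRe_nonneg γ x)
    have hqnn : 0 ≤ T.qform γ := T.qform_nonneg γ
    have hq0 : T.qform γ = 0 := by linarith
    have hIre0 : ∫ x, fRe γ x ∂T.ν = 0 := by linarith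
    have hcos_ae : fRe γ =ᵐ[T.ν] 0 :=
      (MeasureTheory.integral_eq_zero_iff_of_nonneg (fun x => fRe_nonneg γ x)
        (T.fRe_integrable γ)).mp hIre0
    have hsuppS : ∀ x ∈ measSupport T.ν, x ∈ charKernel γ := by
      intro x hxm
      have hcont : Continuous (fRe γ) :=
        continuous_const.sub (Real.continuous_cos.comp (inner_continuous γ))
      have h0 : fRe γ x = 0 := eq_zero_on_measSupport hcont hcos_ae hxm
      have hcos : Real.cos (inner ℝ γ x : ℝ) = 1 := by unfold fRe at h0; linarith
      have hsin : Real.sin (inner ℝ γ x : ℝ) = 0 := by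
        nlinarith [Real.sin_sq_add_cos_sq (inner ℝ γ x : ℝ)]
      rw [mem_charKernel_iff, mul_comm, Complex.exp_mul_I, ← Complex.ofReal_cos,
        ← Complex.ofReal_sin, hcos, hsin]
      simp
    have hGsub : closure (Gν : Set (En n)) ⊆ ((charKernel γ : AddSubgroup (En n)) : Set (En n)) := by
      apply closure_minimal ?_ (charKernel_closed γ)
      rw [hG]
      exact (AddSubgroup.closure_le (charKernel γ)).mpr hsuppS
    obtain ⟨hRe0, hImval⟩ := hmain hGsub
    have hbc : (inner ℝ γ (T.b + cν) : ℝ) = 0 := by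
      rw [inner_add_right]
      have hbγ : (inner ℝ T.b γ : ℝ) = (inner ℝ γ T.b : ℝ) := real_inner_comm _ _
      rw [hImval] at him
      linarith
    have hWperp : ∀ w ∈ W, (inner ℝ γ w : ℝ) = 0 := by
      have hqz : ∀ k, (T.hQpos.sqrt *ᵥ fun i => γ i) k = 0 := (T.qform_eq_zero_iff γ).mp hq0
      intro w hw
      have hle : W ≤ (Submodule.span ℝ {γ})ᗮ := by
        rw [hW, Submodule.span_le]
        rintro v hv
        rcases hv with ⟨i, rfl⟩ | hv
        · rw [SetLike.mem_coe, Submodule.mem_orthogonal_singleton_iff_inner_right]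
          show (inner ℝ γ ((EuclideanSpace.equiv (Fin n) ℝ).symm
            fun j => T.hQpos.sqrt j i) : ℝ) = 0
          rw [real_inner_comm, T.inner_col γ i]
          exact hqz i
        · rw [Set.mem_singleton_iff] at hv
          subst hv
          rw [SetLike.mem_coe, Submodule.mem_orthogonal_singleton_iff_inner_right]
          exact hbc
      exact Submodule.mem_orthogonal_singleton_iff_inner_right.mp (hle hw)
    intro z hz
    rw [Set.mem_add] at hz
    obtain ⟨g, hg, w, hw, rfl⟩ := hz
    have hgS : Complex.exp (Complex.I * ((inner ℝ γ g : ℝ) : ℂ)) = 1 :=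
      hGsub (subset_closure hg)
    rw [inner_add_right]
    push_cast
    rw [mul_add, Complex.exp_add, hgS, hWperp w hw]
    simp
  · -- backward direction
    intro hall
    have hsub : (Gν : Set (En n)) + (W : Set (En n))
        ⊆ ((charKernel γ : AddSubgroup (En n)) : Set (En n)) := fun z hz => hall z hz
    have hGW : (Gν : Set (En n)) ⊆ (Gν : Set (En n)) + (W : Set (En n)) := fun g hg =>
      Set.mem_add.mpr ⟨g, hg, 0, W.zero_mem, add_zero g⟩
    have hGsub : closure (Gν : Set (En n)) ⊆ ((charKernel γ : AddSubgroup (En n)) : Set (En n)) :=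
      closure_minimal (hGW.trans hsub) (charKernel_closed γ)
    have hWperp : ∀ w ∈ W, (inner ℝ γ w : ℝ) = 0 := by
      intro w hw
      apply theta_zero_of_forall
      intro t
      have htw : t • w ∈ W := W.smul_mem t hw
      have hmem := hsub (Set.mem_add.mpr ⟨0, Gν.zero_mem, t • w, htw, zero_add _⟩)
      have : Complex.exp (Complex.I * ((inner ℝ γ (t • w) : ℝ) : ℂ)) = 1 := hmem
      rwa [real_inner_smul_right] at this
    obtain ⟨hRe0, hImval⟩ := hmain hGsub
    have hq0 : T.qform γ = 0 := by
      rw [T.qform_eq_zero_iff γ]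
      intro k
      rw [← T.inner_col γ k, real_inner_comm]
      exact hWperp _ (hσW k)
    have hbc : (inner ℝ γ (T.b + cν) : ℝ) = 0 := hWperp _ hbcW
    rw [T.charExp_zero_iff γ]
    refine ⟨by rw [hq0, hRe0]; ring, ?_⟩
    rw [hImval]
    rw [inner_add_right] at hbc
    have hbγ : (inner ℝ T.b γ : ℝ) = (inner ℝ γ T.b : ℝ) := real_inner_comm _ _
    linarith

end KeyPart


/-- The orthogonal subgroup of `{ψ = 0}` equals `closure (G_ν + W)`. -/
theorem statement17 {n : ℕ} (hn : 0 < n) (T : LevyTriplet n)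
    (Gν : AddSubgroup (En n)) (hG : Gν = AddSubgroup.closure (measSupport T.ν))
    (Vν : Set (En n))
    (hV : Vν = {x ∈ closure (Gν : Set (En n)) | ∀ t : ℝ, t • x ∈ closure (Gν : Set (En n))})
    (hint : IntegrableOn (fun y : En n => y) ({y : En n | ‖y‖ < 1} \ Vν) T.ν)
    (cν : En n) (hc : cν = -∫ y in {y : En n | ‖y‖ < 1} \ Vν, y ∂T.ν)
    (W : Submodule ℝ (En n))
    (hW : W = Submodule.span ℝ
      (Set.range (fun i : Fin n =>
        (EuclideanSpace.equiv (Fin n) ℝ).symm (fun j => T.hQpos.sqrt j i)) ∪ {T.b + cν})) :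
    {x : En n | ∀ γ : En n, T.charExp γ = 0 →
        Complex.exp (Complex.I * ((inner ℝ γ x : ℝ) : ℂ)) = 1}
      = closure ((Gν : Set (En n)) + (W : Set (En n))) := by
  have hkey := key T Gν hG Vν hV hint cν hc W hW
  set H₀ : AddSubgroup (En n) :=
    { carrier := (Gν : Set (En n)) + (W : Set (En n))
      zero_mem' := Set.mem_add.mpr ⟨0, Gν.zero_mem, 0, W.zero_mem, add_zero 0⟩
      add_mem' := by
        intro a b ha hb
        rw [Set.mem_add] at ha hb ⊢
        obtain ⟨g1, hg1, w1, hw1, rfl⟩ := ha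
        obtain ⟨g2, hg2, w2, hw2, rfl⟩ := hb
        exact ⟨g1 + g2, Gν.add_mem hg1 hg2, w1 + w2, W.add_mem hw1 hw2, by abel⟩
      neg_mem' := by
        intro a ha
        rw [Set.mem_add] at ha ⊢
        obtain ⟨g, hg, w, hw, rfl⟩ := ha
        exact ⟨-g, Gν.neg_mem hg, -w, W.neg_mem hw, by abel⟩ } with hH₀_def
  have hH₀coe : (H₀ : Set (En n)) = (Gν : Set (En n)) + (W : Set (En n)) := rfl
  apply Set.Subset.antisymm
  · intro x hx
    by_contra hxc
    have hclosedgrp : IsClosed ((H₀.topologicalClosure : AddSubgroup (En n)) : Set (En n)) :=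
      H₀.isClosed_topologicalClosure
    have hxnot : x ∉ H₀.topologicalClosure := by
      intro hmem
      apply hxc
      have : (H₀.topologicalClosure : Set (En n)) = closure ((Gν : Set (En n)) + (W : Set (En n))) := by
        rw [AddSubgroup.topologicalClosure_coe, hH₀coe]
      rw [← this]
      exact hmem
    obtain ⟨γ, hγ1, hγ2⟩ := closed_subgroup_dual_separates H₀.topologicalClosure hclosedgrp hxnot
    have hψ : T.charExp γ = 0 := by
      rw [hkey γ]
      intro z hz
      have hzH : z ∈ H₀.topologicalClosure := H₀.le_topologicalClosure hz
      obtain ⟨k, hk⟩ := hγ1 z hzH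
      rw [expI_eq_one_iff]
      exact ⟨k, hk⟩
    have hone := hx γ hψ
    rw [expI_eq_one_iff] at hone
    exact hγ2 hone
  · intro z hz
    intro γ hγ
    have hsub : (Gν : Set (En n)) + (W : Set (En n))
        ⊆ {w : En n | Complex.exp (Complex.I * ((inner ℝ γ w : ℝ) : ℂ)) = 1} :=
      fun w hw => (hkey γ).mp hγ w hw
    have hclosed : IsClosed {w : En n | Complex.exp (Complex.I * ((inner ℝ γ w : ℝ) : ℂ)) = 1} :=
      charKernel_closed γ
    exact closure_minimal hsub hclosed hz
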